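/- arXiv:2009.08624 — 3 statements merged into one kernel-verified Lean document; each statement's English description precedes it below -/
import Mathlib

section
/- Let f : ℤ → ℤ be finitely supported with m = min and M = max of its support, m < M. Suppose (i) for every k in the support, the sign of f(k) equals (-1)^k (alternating coefficients), and (ii) every gap in f has length at most one, i.e., there are no two consecutive integers k, k+1 strictly between m and M with f(k) = f(k+1) = 0. Then |Σ_k f(k)·(-1)^k| ≥ ⌈(M - m)/2⌉ + 1. -/
/-! Since the signs of `f` alternate, the alternating sum is `∑ |f k|`, hence at least the
number of points of the support. Among any two consecutive integers in `[m, M]` one lies in the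
support, so the disjoint blocks `{m + 2i - 1, m + 2i}`, `0 ≤ i ≤ (M - m + 1) / 2`, each meet it. -/

open Finset

theorem Int.le_card_of_gaps_le_one {s : Finset ℤ} {m M : ℤ} (hm : m ∈ s) (hM : M ∈ s)
    (hgap : ∀ k, m < k → k < M → k ∈ s ∨ k + 1 ∈ s) :
    (M - m + 1) / 2 + 1 ≤ (#s : ℤ) := by
  set n := (M - m + 1) / 2
  have hblock : ∀ i ∈ Icc 0 n, m + 2 * i ∈ s ∨ m + 2 * i - 1 ∈ s := by
    intro i hi
    rw [mem_Icc] at hi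
    by_contra! hout
    have hi₀ : i ≠ 0 := by rintro rfl; simp_all
    have hM' : m + 2 * i - 1 ≠ M := by rintro rfl; exact hout.2 hM
    have := hgap (m + 2 * i - 1) (by omega) (by omega)
    simp_all
  set g : ℤ → ℤ := fun i => if m + 2 * i ∈ s then m + 2 * i else m + 2 * i - 1
  have hmaps : Set.MapsTo g (Icc 0 n) s := by
    intro i hi
    simp only [g]
    split_ifs with h
    exacts [h, (hblock i hi).resolve_left h]
  -- the block index is recovered from either element of the block by floor division
  have hinj : Set.InjOn g (Icc 0 n) := by
    intro i _ j _ hij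
    simp only [g] at hij
    split_ifs at hij <;> omega
  have hcard := card_le_card_of_injOn g hmaps hinj
  rw [Int.card_Icc] at hcard
  omega

theorem Finset.card_le_sum_abs {ι : Type*} (s : Finset ι) {f : ι → ℤ} (hf : ∀ k ∈ s, f k ≠ 0) :
    (#s : ℤ) ≤ ∑ k ∈ s, |f k| := by
  simpa using card_nsmul_le_sum s (fun k => |f k|) 1 fun k hk => Int.one_le_abs (hf k hk)

theorem Int.mul_eq_abs_of_sign_eq {a ε : ℤ} (h : a.sign = ε) : a * ε = |a| := by
  rw [← h, Int.mul_sign_self, Int.natCast_natAbs]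

theorem abs_alternating_sum_ge_general (f : ℤ →₀ ℤ) (m M : ℤ)
    (hm : m ∈ f.support) (hM : M ∈ f.support)
    (hsign : ∀ k ∈ f.support, (f k).sign = (-1 : ℤ) ^ k.natAbs)
    (hgap : ∀ k : ℤ, m < k → k < M → ¬(f k = 0 ∧ f (k + 1) = 0)) :
    (M - m + 1) / 2 + 1 ≤ |∑ k ∈ f.support, f k * (-1 : ℤ) ^ k.natAbs| := by
  have hsum : ∑ k ∈ f.support, f k * (-1 : ℤ) ^ k.natAbs = ∑ k ∈ f.support, |f k| :=
    sum_congr rfl fun k hk => Int.mul_eq_abs_of_sign_eq (hsign k hk)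
  rw [hsum, abs_of_nonneg (sum_nonneg fun k _ => abs_nonneg (f k))]
  calc (M - m + 1) / 2 + 1 ≤ (#f.support : ℤ) :=
        Int.le_card_of_gaps_le_one hm hM fun k hmk hkM => by
          simpa only [Finsupp.mem_support_iff, ← not_and_or] using hgap k hmk hkM
    _ ≤ ∑ k ∈ f.support, |f k| :=
        card_le_sum_abs _ fun k hk => Finsupp.mem_support_iff.mp hk

theorem abs_alternating_sum_ge (f : ℤ →₀ ℤ) (m M : ℤ)
    (hm : m ∈ f.support) (hM : M ∈ f.support)
    (hmin : ∀ k ∈ f.support, m ≤ k) (hmax : ∀ k ∈ f.support, k ≤ M)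
    (hmM : m < M)
    (hsign : ∀ k ∈ f.support, (f k).sign = (-1 : ℤ) ^ k.natAbs)
    (hgap : ∀ k : ℤ, m < k → k < M → ¬(f k = 0 ∧ f (k + 1) = 0)) :
    (M - m + 1) / 2 + 1 ≤ |∑ k ∈ f.support, f k * (-1 : ℤ) ^ k.natAbs| :=
  abs_alternating_sum_ge_general f m M hm hM hsign hgap
end

section
/- For any integer n with |n| > 6, the Laurent polynomial f(t) = (-t)^n · ((t^{-2} - t^{-1} + 1 - t + t^2)^2 - 1) + 1 in ℤ[t, t^{-1}] has a gap of length greater than one; that is, there exist two consecutive integers k, k+1, strictly between the minimal and maximal degrees of nonzero coefficients of f, such that the coefficients of t^k and t^{k+1} in f are both zero. -/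
/-!
The polynomial `g ^ 2 - 1` (where `g` is the Jones polynomial of the figure-eight knot) is nonzero
and supported in degrees `[-4, 4]`, so multiplying by the unit `±T n` moves its support into
`[n - 4, n + 4]`. For `n ≥ 7` this block lies in degrees `≥ 3`, and adding `1` leaves the degrees
`1` and `2` empty between the constant term and the block; for `n ≤ -7` the same happens in
degrees `-2` and `-1`.
-/

open LaurentPolynomial

section Gap

variable {R : Type*} [Semiring R]

def HasDoubleGap (f : R[T;T⁻¹]) : Prop :=
  ∃ k : ℤ, f.coeff k = 0 ∧ f.coeff (k + 1) = 0 ∧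
    (∃ a ∈ f.coeff.support, a < k) ∧ (∃ b ∈ f.coeff.support, k + 1 < b)

lemma coeff_one_apply (m : ℤ) : (1 : R[T;T⁻¹]).coeff m = if m = 0 then 1 else 0 := by
  rw [← T_zero, T_apply]
  exact if_congr eq_comm rfl rfl

lemma coeff_C_mul_T_mul (c : R) (n m : ℤ) (p : R[T;T⁻¹]) :
    (C c * T n * p).coeff m = c * p.coeff (m - n) := by
  rw [← single_eq_C_mul_T, AddMonoidAlgebra.coeff_single_mul_apply, neg_add_eq_sub]

lemma sub_mem_support_of_mem_support_C_mul_T_mul {c : R} {n m : ℤ} {p : R[T;T⁻¹]}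
    (hm : m ∈ (C c * T n * p).coeff.support) : m - n ∈ p.coeff.support := by
  rw [Finsupp.mem_support_iff, coeff_C_mul_T_mul] at hm
  exact Finsupp.mem_support_iff.mpr (right_ne_zero_of_mul hm)

lemma coeff_add_one_of_ne_zero (q : R[T;T⁻¹]) {m : ℤ} (hm : m ≠ 0) :
    (q + 1).coeff m = q.coeff m := by
  simp [AddMonoidAlgebra.coeff_add, coeff_one_apply, hm]

lemma coeff_eq_zero_of_forall_mem_support {q : R[T;T⁻¹]} {P : ℤ → Prop}
    (hsupp : ∀ m ∈ q.coeff.support, P m) {m : ℤ} (hm : ¬ P m) : q.coeff m = 0 :=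
  Finsupp.notMem_support_iff.mp fun hmem => hm (hsupp m hmem)

lemma exists_mem_support_add_one {q : R[T;T⁻¹]} (hq : q ≠ 0) {P : ℤ → Prop}
    (hsupp : ∀ m ∈ q.coeff.support, P m) (h0 : ¬ P 0) :
    ∃ b ∈ (q + 1).coeff.support, P b := by
  obtain ⟨b, hb⟩ := Finsupp.support_nonempty_iff.mpr (AddMonoidAlgebra.coeff_eq_zero.not.mpr hq)
  have hPb := hsupp b hb
  refine ⟨b, ?_, hPb⟩
  rw [Finsupp.mem_support_iff, coeff_add_one_of_ne_zero _ (by rintro rfl; exact h0 hPb)]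
  exact Finsupp.mem_support_iff.mp hb

variable [Nontrivial R]

lemma zero_mem_support_add_one {q : R[T;T⁻¹]} (hq : q.coeff 0 = 0) :
    (0 : ℤ) ∈ (q + 1).coeff.support := by
  simp [AddMonoidAlgebra.coeff_add, hq]

lemma hasDoubleGap_add_one_of_two_lt {q : R[T;T⁻¹]} (hq : q ≠ 0)
    (hsupp : ∀ m ∈ q.coeff.support, 2 < m) : HasDoubleGap (q + 1) := by
  have hzero : ∀ m ≤ 2, q.coeff m = 0 := fun m hm =>
    coeff_eq_zero_of_forall_mem_support hsupp hm.not_gt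
  obtain ⟨b, hb, hb2⟩ := exists_mem_support_add_one hq hsupp (by norm_num)
  refine ⟨1, ?_, ?_, ⟨0, zero_mem_support_add_one (hzero 0 (by norm_num)), one_pos⟩, ⟨b, hb, hb2⟩⟩
  · rw [coeff_add_one_of_ne_zero _ one_ne_zero, hzero 1 (by norm_num)]
  · rw [coeff_add_one_of_ne_zero _ (by norm_num), hzero _ (by norm_num)]

lemma hasDoubleGap_add_one_of_lt_neg_two {q : R[T;T⁻¹]} (hq : q ≠ 0)
    (hsupp : ∀ m ∈ q.coeff.support, m < -2) : HasDoubleGap (q + 1) := by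
  have hzero : ∀ m ≥ -2, q.coeff m = 0 := fun m hm =>
    coeff_eq_zero_of_forall_mem_support hsupp hm.not_gt
  obtain ⟨a, ha, ha2⟩ := exists_mem_support_add_one hq hsupp (by norm_num)
  refine ⟨-2, ?_, ?_, ⟨a, ha, ha2⟩, ⟨0, zero_mem_support_add_one (hzero 0 (by norm_num)), by norm_num⟩⟩
  · rw [coeff_add_one_of_ne_zero _ (by norm_num), hzero _ (by norm_num)]
  · rw [coeff_add_one_of_ne_zero _ (by norm_num), hzero _ (by norm_num)]

end Gap

section FigureEight

variable (R : Type*) [CommRing R]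

noncomputable def figureEightJones : R[T;T⁻¹] := T (-2) - T (-1) + 1 - T 1 + T 2

lemma figureEightJones_sq_sub_one :
    figureEightJones R ^ 2 - 1 = T (-4) - C 2 * T (-3) + C 3 * T (-2) - C 4 * T (-1) + C 4
      - C 4 * T 1 + C 3 * T 2 - C 2 * T 3 + T 4 := by
  have hT : ∀ a b : ℤ, (T a * T b : R[T;T⁻¹]) = T (a + b) := fun a b => (T_add a b).symm
  rw [figureEightJones]
  ring_nf
  simp only [T_pow, hT, map_ofNat]
  norm_num
  ring

variable {R}

lemma abs_le_four_of_mem_support_figureEightJones_sq_sub_one {j : ℤ}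
    (hj : j ∈ (figureEightJones R ^ 2 - 1).coeff.support) : |j| ≤ 4 := by
  by_contra! hlt
  have hj' : j < -4 ∨ 4 < j := (lt_abs.mp hlt).symm.imp_left (by omega)
  refine Finsupp.mem_support_iff.mp hj ?_
  rw [figureEightJones_sq_sub_one]
  simp (disch := omega) [AddMonoidAlgebra.coeff_add, AddMonoidAlgebra.coeff_sub, T_apply,
    ← single_eq_C_mul_T, if_neg]

lemma figureEightJones_sq_sub_one_ne_zero [Nontrivial R] : figureEightJones R ^ 2 - 1 ≠ 0 := by
  intro h
  have h4 := congrArg (fun p : R[T;T⁻¹] => p.coeff 4) h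
  rw [figureEightJones_sq_sub_one] at h4
  simp [AddMonoidAlgebra.coeff_add, AddMonoidAlgebra.coeff_sub, T_apply,
    ← single_eq_C_mul_T] at h4

end FigureEight

theorem kanenobu_jones_gap (n : ℤ) (hn : 6 < |n|) :
    let g : LaurentPolynomial ℤ := T (-2) - T (-1) + 1 - T 1 + T 2
    let f : LaurentPolynomial ℤ :=
      (C ((-1 : ℤ) ^ n.natAbs)) * T n * (g ^ 2 - 1) + 1
    ∃ k : ℤ, f.coeff k = 0 ∧ f.coeff (k + 1) = 0 ∧
      (∃ a ∈ f.coeff.support, a < k) ∧ (∃ b ∈ f.coeff.support, k + 1 < b) := by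
  intro g f
  set q := C ((-1 : ℤ) ^ n.natAbs) * T n * (figureEightJones ℤ ^ 2 - 1)
  change HasDoubleGap (q + 1)
  have hq : q ≠ 0 :=
    ((((isUnit_neg_one (α := ℤ)).pow _).map C).mul (isUnit_T n)).mul_right_eq_zero.not.mpr
      figureEightJones_sq_sub_one_ne_zero
  have hsupp : ∀ m ∈ q.coeff.support, |m - n| ≤ 4 := fun m hm =>
    abs_le_four_of_mem_support_figureEightJones_sq_sub_one
      (sub_mem_support_of_mem_support_C_mul_T_mul hm)
  rcases lt_abs.mp hn with hpos | hneg
  · refine hasDoubleGap_add_one_of_two_lt hq fun m hm => ?_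
    have := abs_le.mp (hsupp m hm)
    omega
  · refine hasDoubleGap_add_one_of_lt_neg_two hq fun m hm => ?_
    have := abs_le.mp (hsupp m hm)
    omega
end

section
/- Let f and g be nonzero finitely supported functions ℤ → ℤ (coefficient functions of Laurent polynomials), let s ≥ 1 be a natural number, and suppose: (i) maxdeg(f) < mindeg(g); (ii) every gap in f has length at most s; (iii) every gap in g has length at most s; (iv) mindeg(g) - maxdeg(f) - 1 ≤ s. Then every gap in f + g has length at most s. -/
/-- `h` has every gap of length at most `s`: there is no run of `s + 1` consecutive
zeros lying strictly between the minimum and maximum of the support of `h`. -/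
def GapsAtMost (h : ℤ →₀ ℤ) (hs : h.support.Nonempty) (s : ℕ) : Prop :=
  ∀ k : ℤ, h.support.min' hs < k → k + s < h.support.max' hs →
    ∃ j ∈ Finset.Icc k (k + s), h j ≠ 0

theorem gaps_of_sum (f g : ℤ →₀ ℤ) (hf : f ≠ 0) (hg : g ≠ 0)
    (hfs : f.support.Nonempty) (hgs : g.support.Nonempty)
    (s : ℕ) (hs : 1 ≤ s)
    (hlt : f.support.max' hfs < g.support.min' hgs)
    (hfgap : GapsAtMost f hfs s)
    (hggap : GapsAtMost g hgs s)
    (hbetween : g.support.min' hgs - f.support.max' hfs - 1 ≤ (s : ℤ)) :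
    ∀ hfgs : (f + g).support.Nonempty, GapsAtMost (f + g) hfgs s := by
  intro hfgs
  set M := f.support.max' hfs with hM
  set m := g.support.min' hgs with hm
  have hfz : ∀ j : ℤ, M < j → f j = 0 := by
    intro j hj
    by_contra h
    exact absurd (Finset.le_max' _ j (Finsupp.mem_support_iff.mpr h)) (not_le.mpr hj)
  have hgz : ∀ j : ℤ, j < m → g j = 0 := by
    intro j hj
    by_contra h
    exact absurd (Finset.min'_le _ j (Finsupp.mem_support_iff.mpr h)) (not_le.mpr hj)
  have hsupp : (f + g).support = f.support ∪ g.support := by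
    ext j
    simp only [Finsupp.mem_support_iff, Finset.mem_union, Finsupp.add_apply]
    constructor
    · intro h
      by_contra hc
      push_neg at hc
      simp [hc.1, hc.2] at h
    · rintro (h | h)
      · have : g j = 0 :=
          hgz j (lt_of_le_of_lt (Finset.le_max' _ j (Finsupp.mem_support_iff.mpr h)) hlt)
        simpa [this] using h
      · have : f j = 0 :=
          hfz j (lt_of_lt_of_le hlt (Finset.min'_le _ j (Finsupp.mem_support_iff.mpr h)))
        simpa [this] using h
  have hminle : f.support.min' hfs ≤ M := Finset.min'_le _ _ (f.support.max'_mem hfs)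
  have hmaxge : m ≤ g.support.max' hgs := Finset.min'_le _ _ (g.support.max'_mem hgs)
  have hmin : (f + g).support.min' hfgs = f.support.min' hfs := by
    apply le_antisymm
    · exact Finset.min'_le _ _ (by rw [hsupp]; exact Finset.mem_union_left _ (f.support.min'_mem hfs))
    · apply Finset.le_min'
      intro y hy
      rw [hsupp] at hy
      rcases Finset.mem_union.mp hy with h | h
      · exact Finset.min'_le _ _ h
      · exact le_trans (le_trans hminle hlt.le) (Finset.min'_le _ _ h)
  have hmax : (f + g).support.max' hfgs = g.support.max' hgs := by
    apply le_antisymm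
    · apply Finset.max'_le
      intro y hy
      rw [hsupp] at hy
      rcases Finset.mem_union.mp hy with h | h
      · exact le_trans (Finset.le_max' _ _ h) (le_trans hlt.le hmaxge)
      · exact Finset.le_max' _ _ h
    · exact Finset.le_max' _ _ (by rw [hsupp]; exact Finset.mem_union_right _ (g.support.max'_mem hgs))
  intro k hk1 hk2
  rw [hmin] at hk1
  rw [hmax] at hk2
  by_cases hkM : k ≤ M
  · by_cases h2 : k + s < M
    · obtain ⟨j, hj, hfj⟩ := hfgap k hk1 h2
      refine ⟨j, hj, ?_⟩
      have hjle : j ≤ k + s := (Finset.mem_Icc.mp hj).2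
      have : g j = 0 := hgz j (lt_trans (lt_of_le_of_lt hjle h2) hlt)
      simpa [Finsupp.add_apply, this] using hfj
    · push_neg at h2
      refine ⟨M, Finset.mem_Icc.mpr ⟨hkM, h2⟩, ?_⟩
      have hfM : f M ≠ 0 := Finsupp.mem_support_iff.mp (f.support.max'_mem hfs)
      have : g M = 0 := hgz M hlt
      simpa [Finsupp.add_apply, this] using hfM
  · push_neg at hkM
    rcases lt_trichotomy k m with hkm | hkm | hkm
    · have hms : m ≤ k + s := by omega
      refine ⟨m, Finset.mem_Icc.mpr ⟨hkm.le, hms⟩, ?_⟩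
      have hgm : g m ≠ 0 := Finsupp.mem_support_iff.mp (g.support.min'_mem hgs)
      have : f m = 0 := hfz m hlt
      simpa [Finsupp.add_apply, this] using hgm
    · refine ⟨k, Finset.mem_Icc.mpr ⟨le_refl k, by omega⟩, ?_⟩
      have hgm : g m ≠ 0 := Finsupp.mem_support_iff.mp (g.support.min'_mem hgs)
      have : f m = 0 := hfz m hlt
      rw [hkm]
      simpa [Finsupp.add_apply, this] using hgm
    · obtain ⟨j, hj, hgj⟩ := hggap k hkm hk2
      refine ⟨j, hj, ?_⟩
      have hjge : k ≤ j := (Finset.mem_Icc.mp hj).1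
      have : f j = 0 := hfz j (lt_of_lt_of_le hkM hjge)
      simpa [Finsupp.add_apply, this] using hgj
end
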